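/- arXiv:0705.4499 — 6 statements merged into one kernel-verified Lean document; each statement's English description precedes it below -/
import Mathlib

section
/- Suppose there is a bijection γ : m^a → n^b satisfying e_{i₀} f_{γ(i₁⋯i_a)} = f_{γ(i₀⋯i_{a−1})} e_{i_a} in F_θ^+ for all i₀,…,i_a ∈ m. Then for all u, u' ∈ m^a, e_u f_{γ(u')} = f_{γ(u)} e_{u'}. -/
/-- If a bijection `γ : mᵃ → nᵇ` satisfies the one-letter shift identity
`e_{i₀} f_{γ(i₁⋯i_a)} = f_{γ(i₀⋯i_{a-1})} e_{i_a}` for all `i₀,…,i_a`, then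
`e_u f_{γ(u')} = f_{γ(u)} e_{u'}` for all words `u, u'` of length `a`. -/
theorem stmt_7 (m n a b : ℕ)
    (M : Type*) [Monoid M] (e : Fin m → M) (f : Fin n → M)
    (E : List (Fin m) → M) (F : List (Fin n) → M)
    (hE : ∀ l, E l = (l.map e).prod) (hF : ∀ l, F l = (l.map f).prod)
    (γ : (Fin a → Fin m) → (Fin b → Fin n)) (hγ : Function.Bijective γ)
    (hid : ∀ w : Fin (a + 1) → Fin m,
      e (w 0) * F (List.ofFn (γ (fun t => w t.succ))) =
        F (List.ofFn (γ (fun t => w t.castSucc))) * e (w (Fin.last a))) :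
    ∀ u u' : Fin a → Fin m,
      E (List.ofFn u) * F (List.ofFn (γ u')) = F (List.ofFn (γ u)) * E (List.ofFn u') := by
  intro u u'
  rcases Nat.eq_zero_or_pos a with ha | ha
  · subst ha
    have huu' : u = u' := funext fun t => t.elim0
    subst huu'
    simp [hE]
  have hEcons : ∀ (x : Fin m) (l : List (Fin m)), E (x :: l) = e x * E l := by
    intro x l; simp [hE]
  have aux : ∀ (k : ℕ) (c : ℕ → Fin m),
      E (List.ofFn (fun t : Fin k => c t)) *
          F (List.ofFn (γ (fun t : Fin a => c (k + t)))) =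
        F (List.ofFn (γ (fun t : Fin a => c t))) *
          E (List.ofFn (fun t : Fin k => c (a + t))) := by
    intro k
    induction k with
    | zero =>
      intro c
      have h0 : (fun t : Fin a => c (0 + (t : ℕ))) = fun t : Fin a => c t := by
        funext t; congr 1; omega
      simp [hE, h0]
    | succ k ih =>
      intro c
      have h1 : (List.ofFn (fun t : Fin (k + 1) => c t)) =
          c 0 :: List.ofFn (fun t : Fin k => c ((t : ℕ) + 1)) := by
        rw [List.ofFn_succ]; rfl
      have h2 : (List.ofFn (fun t : Fin (k + 1) => c (a + t))) =
          c a :: List.ofFn (fun t : Fin k => c (a + (t : ℕ) + 1)) := by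
        rw [List.ofFn_succ]
        congr 1
      have ihc := ih (fun i => c (i + 1))
      have hw := hid (fun t : Fin (a + 1) => c t)
      have hwsucc : (fun t : Fin a => c ((t.succ : Fin (a+1)) : ℕ)) =
          fun t : Fin a => c ((t : ℕ) + 1) := by
        funext t; congr 1
      have hwcast : (fun t : Fin a => c ((t.castSucc : Fin (a+1)) : ℕ)) =
          fun t : Fin a => c t := by
        funext t; congr 1
      rw [hwsucc, hwcast] at hw
      simp only [Fin.val_last] at hw
      have h3 : (fun t : Fin a => c (k + 1 + (t : ℕ))) =
          fun t : Fin a => c (k + (t : ℕ) + 1) := by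
        funext t; congr 1; omega
      simp only [Fin.val_zero] at hw
      rw [h1, h2, hEcons, hEcons, h3, mul_assoc, ihc, ← mul_assoc, hw,
        mul_assoc]
  -- now specialize
  have hc : ∀ i : ℕ, i < a ∨ ¬ i < a := fun i => Classical.em _
  set c : ℕ → Fin m := fun i =>
    if h : i < a then u ⟨i, h⟩ else u' ⟨(i - a) % a, Nat.mod_lt _ ha⟩ with hcdef
  have key := aux a c
  have e1 : (fun t : Fin a => c t) = u := by
    funext t; simp [hcdef, t.isLt]
  have e2 : (fun t : Fin a => c (a + t)) = u' := by
    funext t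
    have hna : ¬ a + (t : ℕ) < a := by omega
    simp only [hcdef]
    rw [dif_neg hna]
    congr 1
    apply Fin.ext
    have ht := t.isLt
    simp only [Nat.add_sub_cancel_left]
    exact Nat.mod_eq_of_lt t.isLt
  rw [e1, e2] at key
  exact key
end

section
/- Suppose m^a = n^b and there are bijections α : m^a → n^b and β : n^b → m^a with e_u f_v = f_{α(u)} e_{β(v)} for all u ∈ m^a, v ∈ n^b. Let k be the order of the permutation β∘α of m^a. Then the map γ : (m^a)^k → (n^b)^k defined by γ(u₁,…,u_k) = (α(u₁), αβα(u₂), …, α(βα)^{k−1}(u_k)) satisfies e_{u₀} f_{γ(u₁,…,u_k)} = f_{γ(u₀,…,u_{k−1})} e_{u_k} for all u₀,…,u_k ∈ m^a. In particular γ is a bijection witnessing (ak,−bk)-periodicity. -/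
theorem aux_stmt9 {A B M : Type*} [Monoid M] (E : A → M) (F : B → M)
    (α : A → B) (β : B → A)
    (hrel : ∀ u v, E u * F v = F (α u) * E (β v))
    (U : ℕ → A) :
    ∀ i, E (U 0) * (List.ofFn fun j : Fin i => F (α ((β ∘ α)^[j.val] (U (j.val+1))))).prod =
      (List.ofFn fun j : Fin i => F (α ((β ∘ α)^[j.val] (U j.val)))).prod *
        E ((β ∘ α)^[i] (U i))
  | 0 => by simp
  | (i+1) => by
    rw [List.ofFn_succ' (fun j : Fin (i+1) => F (α ((β ∘ α)^[j.val] (U (j.val+1))))),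
        List.ofFn_succ' (fun j : Fin (i+1) => F (α ((β ∘ α)^[j.val] (U j.val))))]
    simp only [List.concat_eq_append, List.prod_append, List.prod_singleton,
      Fin.coe_castSucc, Fin.val_last]
    rw [← mul_assoc, aux_stmt9 E F α β hrel U i, mul_assoc, hrel, mul_assoc]
    congr 1
    congr 1
    rw [Function.iterate_succ_apply']
    rfl

/-- If `e_u f_v = f_{α(u)} e_{β(v)}` for bijections `α : mᵃ → nᵇ`, `β : nᵇ → mᵃ`, and `k`
is the order of the permutation `β ∘ α`, then
`γ(u₁,…,u_k) = (α(u₁), αβα(u₂), …, α(βα)^{k-1}(u_k))` satisfies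
`e_{u₀} f_{γ(u₁,…,u_k)} = f_{γ(u₀,…,u_{k-1})} e_{u_k}`, and `γ` is a bijection,
witnessing `(ak,-bk)`-periodicity. -/
theorem stmt_9 (m n a b k : ℕ)
    (M : Type*) [Monoid M] (e : Fin m → M) (f : Fin n → M)
    (E : (Fin a → Fin m) → M) (F : (Fin b → Fin n) → M)
    (hE : ∀ u, E u = (List.ofFn fun t => e (u t)).prod)
    (hF : ∀ v, F v = (List.ofFn fun t => f (v t)).prod)
    (α : (Fin a → Fin m) → (Fin b → Fin n)) (β : (Fin b → Fin n) → (Fin a → Fin m))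
    (hα : Function.Bijective α) (hβ : Function.Bijective β)
    (hrel : ∀ u v, E u * F v = F (α u) * E (β v))
    (hk : 0 < k) (hord : (β ∘ α)^[k] = id)
    (hmin : ∀ l : ℕ, 0 < l → l < k → (β ∘ α)^[l] ≠ id) :
    (∀ u : Fin (k + 1) → (Fin a → Fin m),
      E (u 0) * (List.ofFn fun j : Fin k => F (α ((β ∘ α)^[j.val] (u j.succ)))).prod =
        (List.ofFn fun j : Fin k => F (α ((β ∘ α)^[j.val] (u j.castSucc)))).prod *
          E (u (Fin.last k))) ∧
    Function.Bijective (fun (u : Fin k → (Fin a → Fin m)) (j : Fin k) =>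
      α ((β ∘ α)^[j.val] (u j))) := by
  constructor
  · intro u
    set U : ℕ → (Fin a → Fin m) := fun i => u ⟨min i k, Nat.lt_succ_of_le (min_le_right _ _)⟩
      with hU
    have h := aux_stmt9 E F α β hrel U k
    have hU0 : U 0 = u 0 :=
      congrArg u (Fin.val_injective (by simp))
    have hUk : U k = u (Fin.last k) :=
      congrArg u (Fin.val_injective (by simp))
    have h1 : ∀ j : Fin k, U (j.val + 1) = u j.succ := fun j =>
      congrArg u (Fin.val_injective (by
        simp [Nat.min_eq_left (Nat.succ_le_of_lt j.isLt)]))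
    have h2 : ∀ j : Fin k, U j.val = u j.castSucc := fun j =>
      congrArg u (Fin.val_injective (by
        simp [Nat.min_eq_left (le_of_lt j.isLt)]))
    rw [hU0, hUk, hord] at h
    simp only [id_eq] at h
    calc E (u 0) * (List.ofFn fun j : Fin k => F (α ((β ∘ α)^[j.val] (u j.succ)))).prod
        = E (u 0) * (List.ofFn fun j : Fin k => F (α ((β ∘ α)^[j.val] (U (j.val+1))))).prod := by
          congr 1
          exact congrArg List.prod (congrArg List.ofFn (funext fun j => by rw [h1 j]))
      _ = (List.ofFn fun j : Fin k => F (α ((β ∘ α)^[j.val] (U j.val)))).prod *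
            E (u (Fin.last k)) := h
      _ = (List.ofFn fun j : Fin k => F (α ((β ∘ α)^[j.val] (u j.castSucc)))).prod *
            E (u (Fin.last k)) := by
          congr 1
          exact congrArg List.prod (congrArg List.ofFn (funext fun j => by rw [h2 j]))
  · have hcomp : ∀ j : Fin k, Function.Bijective (fun x => α ((β ∘ α)^[j.val] x)) := by
      intro j
      exact hα.comp ((hβ.comp hα).iterate j.val)
    constructor
    · intro u u' huu'
      funext j
      exact (hcomp j).1 (congrFun huu' j)
    · intro v
      refine ⟨fun j => ((hcomp j).2 (v j)).choose, ?_⟩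
      funext j
      exact ((hcomp j).2 (v j)).choose_spec
end

section
/- In the 4×4 '8-cycle' 2-graph F_θ^+ (relations given by the 8-cycle ((2,1),(1,2),(3,1),(1,3),(4,2),(2,4),(4,3),(3,4)), the 2-cycles ((1,4),(4,1)) and ((2,3),(3,2)), and fixed points (i,i)), the following identities hold for all k ≥ 0: e₁₂^{2k+1} f₁₁^{2k+1} = (f₁₃ f₃₄)^k f₁₃ e₁₁^{2k+1}, and for all k ≥ 1: e₁₂^{2k} f₁₁^{2k} = (f₁₃ f₃₄)^k e₁₁^{2k}. -/
private lemma key_lemma {M : Type*} [Monoid M] (A B C D E G : M)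
    (hAB : A * B = C * E) (hAC : A * C = C * G) (hGB : G * B = D * E)
    (hGD : G * D = D * A) (hEB : E * B = B * E) :
    (∀ k : ℕ, A ^ (2 * k + 1) * B ^ (2 * k + 1) = (C * D) ^ k * C * E ^ (2 * k + 1)) ∧
    (∀ k : ℕ, A ^ (2 * k) * B ^ (2 * k) = (C * D) ^ k * E ^ (2 * k)) := by
  have hACn : ∀ n : ℕ, A ^ n * C = C * G ^ n := fun n =>
    ((SemiconjBy.pow_right (hAC.symm : SemiconjBy C G A) n)).symm
  have hGDn : ∀ n : ℕ, G ^ n * D = D * A ^ n := fun n =>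
    ((SemiconjBy.pow_right (hGD.symm : SemiconjBy D A G) n)).symm
  have hEBc : Commute E B := hEB
  have hEBn : ∀ n : ℕ, E * B ^ n = B ^ n * E := fun n => (hEBc.pow_right n).eq
  have hstep : ∀ n : ℕ, A ^ (n + 2) * B ^ (n + 2) =
      C * D * (A ^ n * B ^ n) * (E * E) := by
    intro n
    calc A ^ (n + 2) * B ^ (n + 2)
        = A ^ (n + 1) * (A * B) * B ^ (n + 1) := by
          rw [pow_succ, pow_succ' B (n+1)]; simp only [mul_assoc]
      _ = A ^ (n + 1) * C * (E * B ^ (n + 1)) := by rw [hAB]; simp only [mul_assoc]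
      _ = C * G ^ (n + 1) * (B ^ (n + 1) * E) := by rw [hACn, hEBn]
      _ = C * (G ^ n * (G * B) * B ^ n) * E := by
          rw [pow_succ, pow_succ' B n]; simp only [mul_assoc]
      _ = C * (G ^ n * D * (E * B ^ n)) * E := by rw [hGB]; simp only [mul_assoc]
      _ = C * (D * A ^ n * (B ^ n * E)) * E := by rw [hGDn, hEBn]
      _ = C * D * (A ^ n * B ^ n) * (E * E) := by simp only [mul_assoc]
  constructor
  · intro k
    induction k with
    | zero => simpa using hAB
    | succ k ih =>
        have h1 : 2 * (k + 1) + 1 = (2 * k + 1) + 2 := by ring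
        rw [h1, hstep, ih]
        calc C * D * ((C * D) ^ k * C * E ^ (2 * k + 1)) * (E * E)
            = (C * D) * (C * D) ^ k * C * (E ^ (2 * k + 1) * E * E) := by
              simp only [mul_assoc]
          _ = (C * D) ^ (k + 1) * C * E ^ (2 * k + 1 + 2) := by
              rw [pow_succ' (C * D) k, pow_add E (2 * k + 1) 2, pow_two]
              simp only [mul_assoc]
  · intro k
    induction k with
    | zero => simp
    | succ k ih =>
        have h1 : 2 * (k + 1) = 2 * k + 2 := by ring
        rw [h1, hstep, ih]
        calc C * D * ((C * D) ^ k * E ^ (2 * k)) * (E * E)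
            = (C * D) * (C * D) ^ k * (E ^ (2 * k) * E * E) := by
              simp only [mul_assoc]
          _ = (C * D) ^ (k + 1) * E ^ (2 * k + 2) := by
              rw [pow_succ' (C * D) k, pow_add E (2 * k) 2, pow_two]
              simp only [mul_assoc]

/-- In the 4×4 "8-cycle" 2-graph (0-based indices; relations
`e_i f_j = f_{J i j} e_{I i j}` encoded by the matrices below), the identities
`e₁₂^{2k+1} f₁₁^{2k+1} = (f₁₃ f₃₄)^k f₁₃ e₁₁^{2k+1}` (for `k ≥ 0`) and
`e₁₂^{2k} f₁₁^{2k} = (f₁₃ f₃₄)^k e₁₁^{2k}` (for `k ≥ 1`) hold. -/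
theorem stmt_10 (M : Type*) [Monoid M] (e f : Fin 4 → M)
    (hrel : ∀ i j : Fin 4,
      e i * f j =
        f ((![![0, 0, 1, 0], ![1, 1, 1, 2], ![2, 2, 2, 0], ![3, 3, 3, 3]] :
              Fin 4 → Fin 4 → Fin 4) i j) *
        e ((![![0, 2, 3, 3], ![0, 1, 2, 3], ![0, 1, 2, 1], ![0, 1, 2, 3]] :
              Fin 4 → Fin 4 → Fin 4) i j)) :
    (∀ k : ℕ,
      (e 0 * e 1) ^ (2 * k + 1) * (f 0 * f 0) ^ (2 * k + 1) =
        ((f 0 * f 2) * (f 2 * f 3)) ^ k * (f 0 * f 2) * (e 0 * e 0) ^ (2 * k + 1)) ∧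
    (∀ k : ℕ, 1 ≤ k →
      (e 0 * e 1) ^ (2 * k) * (f 0 * f 0) ^ (2 * k) =
        ((f 0 * f 2) * (f 2 * f 3)) ^ k * (e 0 * e 0) ^ (2 * k)) := by
  have h00 : e 0 * f 0 = f 0 * e 0 := by simpa using hrel 0 0
  have h01 : e 0 * f 1 = f 0 * e 2 := by simpa using hrel 0 1
  have h02 : e 0 * f 2 = f 1 * e 3 := by simpa using hrel 0 2
  have h10 : e 1 * f 0 = f 1 * e 0 := by simpa using hrel 1 0
  have h13 : e 1 * f 3 = f 2 * e 3 := by simpa using hrel 1 3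
  have h20 : e 2 * f 0 = f 2 * e 0 := by simpa using hrel 2 0
  have h21 : e 2 * f 1 = f 2 * e 1 := by simpa using hrel 2 1
  have h23 : e 2 * f 3 = f 0 * e 1 := by simpa using hrel 2 3
  have h30 : e 3 * f 0 = f 3 * e 0 := by simpa using hrel 3 0
  have h32 : e 3 * f 2 = f 3 * e 2 := by simpa using hrel 3 2
  have h00' : ∀ x, e 0 * (f 0 * x) = f 0 * (e 0 * x) := fun x => by
    rw [← mul_assoc, h00, mul_assoc]
  have h01' : ∀ x, e 0 * (f 1 * x) = f 0 * (e 2 * x) := fun x => by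
    rw [← mul_assoc, h01, mul_assoc]
  have h10' : ∀ x, e 1 * (f 0 * x) = f 1 * (e 0 * x) := fun x => by
    rw [← mul_assoc, h10, mul_assoc]
  have h13' : ∀ x, e 1 * (f 3 * x) = f 2 * (e 3 * x) := fun x => by
    rw [← mul_assoc, h13, mul_assoc]
  have h20' : ∀ x, e 2 * (f 0 * x) = f 2 * (e 0 * x) := fun x => by
    rw [← mul_assoc, h20, mul_assoc]
  have h21' : ∀ x, e 2 * (f 1 * x) = f 2 * (e 1 * x) := fun x => by
    rw [← mul_assoc, h21, mul_assoc]
  have h30' : ∀ x, e 3 * (f 0 * x) = f 3 * (e 0 * x) := fun x => by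
    rw [← mul_assoc, h30, mul_assoc]
  have h32' : ∀ x, e 3 * (f 2 * x) = f 3 * (e 2 * x) := fun x => by
    rw [← mul_assoc, h32, mul_assoc]
  have hAB : (e 0 * e 1) * (f 0 * f 0) = (f 0 * f 2) * (e 0 * e 0) := by
    simp only [mul_assoc]; rw [h10', h01', h00, h20']
  have hAC : (e 0 * e 1) * (f 0 * f 2) = (f 0 * f 2) * (e 1 * e 3) := by
    simp only [mul_assoc]; rw [h10', h01', h02, h21']
  have hGB : (e 1 * e 3) * (f 0 * f 0) = (f 2 * f 3) * (e 0 * e 0) := by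
    simp only [mul_assoc]; rw [h30', h13', h00, h30']
  have hGD : (e 1 * e 3) * (f 2 * f 3) = (f 2 * f 3) * (e 0 * e 1) := by
    simp only [mul_assoc]; rw [h32', h13', h23, h30']
  have hEB : (e 0 * e 0) * (f 0 * f 0) = (f 0 * f 0) * (e 0 * e 0) := by
    simp only [mul_assoc]; rw [h00', h00', h00, h00']
  obtain ⟨hodd, heven⟩ := key_lemma (e 0 * e 1) (f 0 * f 0) (f 0 * f 2) (f 2 * f 3)
    (e 0 * e 0) (e 1 * e 3) hAB hAC hGB hGD hEB
  exact ⟨hodd, fun k _ => heven k⟩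
end

section
/- Let A be a unital C*-algebra, B ⊆ A a simple unital C*-subalgebra containing the unit of A, and Φ : A → B a faithful positive map that is approximately inner (Φ(x) = lim_k W_k* x W_k for isometries W_k ∈ A). Then A is simple. -/
/-- If `B` is a simple closed unital C*-subalgebra of a unital C*-algebra `A`
(containing the unit) and `Φ : A → B` is a faithful positive approximately inner map
(via isometries), then `A` is simple. -/
theorem stmt_16 (A : Type*) [NormedRing A] [StarRing A] [CStarRing A]
    [NormedAlgebra ℂ A] [StarModule ℂ A] [CompleteSpace A] [PartialOrder A] [StarOrderedRing A]
    (B : StarSubalgebra ℂ A) (hBclosed : IsClosed (B : Set A))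
    (hBsimple : ∀ J : TwoSidedIdeal B, IsClosed (J : Set B) → J = ⊥ ∨ J = ⊤)
    (Φ : A →ₗ[ℂ] A) (hrange : ∀ x : A, Φ x ∈ B)
    (hpos : ∀ a : A, 0 ≤ a → 0 ≤ Φ a)
    (hfaithful : ∀ a : A, 0 ≤ a → a ≠ 0 → Φ a ≠ 0)
    (W : ℕ → A) (hiso : ∀ k : ℕ, star (W k) * W k = 1)
    (hlim : ∀ x : A,
      Filter.Tendsto (fun k => star (W k) * x * W k) Filter.atTop (nhds (Φ x))) :
    ∀ J : TwoSidedIdeal A, IsClosed (J : Set A) → J = ⊥ ∨ J = ⊤ := by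
  intro J hJclosed
  by_cases hbot : J = ⊥
  · exact Or.inl hbot
  right
  -- get a nonzero element of J
  obtain ⟨a, haJ, ha0⟩ : ∃ a, a ∈ J ∧ a ≠ 0 := by
    by_contra h
    push_neg at h
    apply hbot
    refine le_antisymm (fun x hx => ?_) bot_le
    have := h x hx
    simp [this]
  -- p = a* a is a positive nonzero element of J
  set p := star a * a with hp
  have hpJ : p ∈ J := J.mul_mem_left _ _ haJ
  have hp0 : (0 : A) ≤ p := star_mul_self_nonneg a
  have hpne : p ≠ 0 := by
    intro h
    exact ha0 (CStarRing.star_mul_self_eq_zero_iff a |>.mp h)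
  -- Φ p belongs to J since J is closed and each W_k* p W_k ∈ J
  have hΦpJ : Φ p ∈ J := by
    have hmem : ∀ k, star (W k) * p * W k ∈ J :=
      fun k => J.mul_mem_right _ _ (J.mul_mem_left _ _ hpJ)
    exact hJclosed.mem_of_tendsto (hlim p) (Filter.Eventually.of_forall hmem)
  have hΦpne : Φ p ≠ 0 := hfaithful p hp0 hpne
  -- pull J back to a closed two-sided ideal of B
  let J' : TwoSidedIdeal B := J.comap (B.subtype : B →⋆ₐ[ℂ] A)
  have hJ'mem : ∀ b : B, b ∈ J' ↔ (b : A) ∈ J := fun b => TwoSidedIdeal.mem_comap (f := (B.subtype : B →⋆ₐ[ℂ] A))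
  have hJ'closed : IsClosed (J' : Set B) := by
    have : (J' : Set B) = (Subtype.val) ⁻¹' (J : Set A) := by
      ext b; exact hJ'mem b
    rw [this]
    exact hJclosed.preimage continuous_subtype_val
  have hJ'ne : J' ≠ ⊥ := by
    intro h
    have hb : (⟨Φ p, hrange p⟩ : B) ∈ J' := (hJ'mem _).mpr hΦpJ
    rw [h] at hb
    have : (⟨Φ p, hrange p⟩ : B) = 0 := by simpa using hb
    exact hΦpne (congrArg Subtype.val this)
  have hJ'top : J' = ⊤ := (hBsimple J' hJ'closed).resolve_left hJ'ne
  have h1 : (1 : B) ∈ J' := hJ'top ▸ trivial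
  have h1A : (1 : A) ∈ J := by simpa using (hJ'mem 1).mp h1
  exact TwoSidedIdeal.eq_top _ h1A
end

section
/- Suppose every tail of F_θ^+ is eventually (a,−b)-periodic for positive integers a, b and m ≥ 2. Then condition (i) fails: for every v ∈ n^b, the word u' in the unique factorization e_u f_v = f_{v'} e_{u'} depends only on v and not on u ∈ m^a. -/
/-!
Let `Φ (u, v) = (u', v')` when `e_u f_v = f_{v'} e_{u'}` for `u ∈ mᵃ`, `v ∈ nᵇ`; unique
factorization makes `Φ` a bijection. A staircase of `a × b` blocks with tops `B k` and left sides
`v` therefore extends, block diagonal by block diagonal, to a grid of blocks, and cutting the blocks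
into squares gives a tail. If that tail is eventually `(a,-b)`-periodic, the block grid is
eventually invariant under the diagonal shift, and comparing the block just below the staircase
with its shift gives `Φ ((Φ (B k, v)).1, (Φ (B (k + 1), v)).2) = (B (k + 1), v)` for large `k`.
Choosing `B` with period `u₂, u₁, u₁` and using injectivity of `Φ` yields
`(Φ (u₂, v)).1 = (Φ (u₁, v)).1`.
-/

namespace TwoGraphTail

variable {α β : Type*}

section Push

variable (f : α × β → α × β)

def pushCol : α → List β → List β × α
  | i, [] => ([], i)
  | i, j :: w => ((f (i, j)).2 :: (pushCol (f (i, j)).1 w).1, (pushCol (f (i, j)).1 w).2)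

def pushBlock : List α → List β → List β × List α
  | [], v => (v, [])
  | i :: u, v =>
      ((pushCol f i (pushBlock u v).1).1, (pushCol f i (pushBlock u v).1).2 :: (pushBlock u v).2)

@[simp] lemma pushCol_nil (i : α) : pushCol f i [] = ([], i) := rfl

@[simp] lemma pushCol_cons (i : α) (j : β) (w : List β) :
    pushCol f i (j :: w) =
      ((f (i, j)).2 :: (pushCol f (f (i, j)).1 w).1, (pushCol f (f (i, j)).1 w).2) := rfl

@[simp] lemma pushBlock_nil (v : List β) : pushBlock f [] v = (v, []) := rfl

@[simp] lemma pushBlock_cons (i : α) (u : List α) (v : List β) :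
    pushBlock f (i :: u) v =
      ((pushCol f i (pushBlock f u v).1).1,
        (pushCol f i (pushBlock f u v).1).2 :: (pushBlock f u v).2) := rfl

@[simp] lemma length_pushCol_fst (i : α) (w : List β) : (pushCol f i w).1.length = w.length := by
  induction w generalizing i <;> simp [*]

@[simp] lemma length_pushBlock_fst (u : List α) (v : List β) :
    (pushBlock f u v).1.length = v.length := by
  induction u <;> simp [*]

@[simp] lemma length_pushBlock_snd (u : List α) (v : List β) :
    (pushBlock f u v).2.length = u.length := by
  induction u <;> simp [*]

lemma pushCol_append (i : α) (w₁ w₂ : List β) :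
    pushCol f i (w₁ ++ w₂) =
      ((pushCol f i w₁).1 ++ (pushCol f (pushCol f i w₁).2 w₂).1,
        (pushCol f (pushCol f i w₁).2 w₂).2) := by
  induction w₁ generalizing i <;> simp [*]

lemma pushBlock_append (u₁ u₂ : List α) (v : List β) :
    pushBlock f (u₁ ++ u₂) v =
      ((pushBlock f u₁ (pushBlock f u₂ v).1).1,
        (pushBlock f u₁ (pushBlock f u₂ v).1).2 ++ (pushBlock f u₂ v).2) := by
  induction u₁ <;> simp [*]

lemma map_pushCol_take (d : β) (i : α) (w : List β) {c : ℕ} (hc : c < w.length) :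
    f ((pushCol f i (w.take c)).2, w.getD c d) =
      ((pushCol f i (w.take (c + 1))).2, (pushCol f i w).1.getD c d) := by
  induction w generalizing i c with
  | nil => simp at hc
  | cons j w ih =>
    cases c with
    | zero => simp
    | succ c => simpa using ih (f (i, j)).1 (by simpa using hc)

lemma getD_pushBlock_snd (d : α) (u : List α) (v : List β) {r : ℕ} (hr : r < u.length) :
    (pushBlock f u v).2.getD r d =
      (pushCol f (u.getD r d) (pushBlock f (u.drop (r + 1)) v).1).2 := by
  induction u generalizing r with
  | nil => simp at hr
  | cons i u ih =>
    cases r with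
    | zero => simp
    | succ r => simpa using ih (by simpa using hr)

end Push

section Inverse

variable (θ : α × β ≃ α × β)

lemma pushCol_symm_reverse (i : α) (w : List β) :
    pushCol θ.symm (pushCol θ i w).2 (pushCol θ i w).1.reverse = (w.reverse, i) := by
  induction w generalizing i <;> simp [pushCol_append, *]

lemma pushBlock_symm_reverse (u : List α) (v : List β) :
    pushBlock θ.symm (pushBlock θ u v).2.reverse (pushBlock θ u v).1.reverse =
      (v.reverse, u.reverse) := by
  induction u <;> simp [pushBlock_append, pushCol_symm_reverse, *]

def blockMap (f : α × β → α × β) (x : List α × List β) : List α × List β :=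
  ((pushBlock f x.1 x.2).2, (pushBlock f x.1 x.2).1)

def blockEquiv : List α × List β ≃ List α × List β where
  toFun := blockMap θ
  invFun y := ((blockMap θ.symm (y.1.reverse, y.2.reverse)).1.reverse,
    (blockMap θ.symm (y.1.reverse, y.2.reverse)).2.reverse)
  left_inv x := by simp [blockMap, pushBlock_symm_reverse]
  right_inv y := by
    have h := pushBlock_symm_reverse θ.symm y.1.reverse y.2.reverse
    simp only [Equiv.symm_symm, List.reverse_reverse] at h
    simp [blockMap, h]

@[simp] lemma blockEquiv_apply (x : List α × List β) : blockEquiv θ x = blockMap θ x := rfl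

end Inverse

section Grid

/-- `G k l` is the (top, left) pair of block `(k, l)`, where `k` grows leftwards and `l` downwards,
and `Φ` sends it to the (bottom, right) pair. -/
def IsGrid (Φ : α × β → α × β) (G : ℤ → ℤ → α × β) : Prop :=
  ∀ k l, (Φ (G k l)).1 = (G k (l + 1)).1 ∧ (Φ (G (k + 1) l)).2 = (G k l).2

variable (Φ : α × β ≃ α × β)

/-- Moves the data of the block diagonal `l - k = d` to the diagonal `l - k = d + 1`. -/
def diagShift : Equiv.Perm (ℤ → α × β) where
  toFun g k := ((Φ (g k)).1, (Φ (g (k + 1))).2)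
  invFun h k := Φ.symm ((h k).1, (h (k - 1)).2)
  left_inv g := by funext k; simp
  right_inv h := by funext k; simp

def stairGrid (g : ℤ → α × β) (k l : ℤ) : α × β := (diagShift Φ ^ (l - k)) g k

@[simp] lemma stairGrid_self (g : ℤ → α × β) (k : ℤ) : stairGrid Φ g k k = g k := by
  simp [stairGrid]

lemma isGrid_stairGrid (g : ℤ → α × β) : IsGrid Φ (stairGrid Φ g) := by
  intro k l
  constructor
  · rw [stairGrid, stairGrid, show l + 1 - k = 1 + (l - k) by ring, zpow_one_add]
    rfl
  · rw [stairGrid, stairGrid, show l - k = 1 + (l - (k + 1)) by ring, zpow_one_add]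
    rfl

lemma stairGrid_mem {p : α → Prop} {q : β → Prop}
    (hΦ : ∀ x, p (Φ x).1 ∧ q (Φ x).2 ↔ p x.1 ∧ q x.2) {g : ℤ → α × β}
    (hg : ∀ k, p (g k).1 ∧ q (g k).2) (k l : ℤ) :
    p (stairGrid Φ g k l).1 ∧ q (stairGrid Φ g k l).2 := by
  set S : Set (ℤ → α × β) := {h | ∀ k, p (h k).1 ∧ q (h k).2}
  have hS : ∀ h ∈ S, diagShift Φ h ∈ S :=
    fun h hh k => ⟨((hΦ _).2 (hh k)).1, ((hΦ _).2 (hh (k + 1))).2⟩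
  have hS' : ∀ h ∈ S, (diagShift Φ)⁻¹ h ∈ S := fun h hh k =>
    (hΦ _).1 (by simpa [Equiv.Perm.inv_def, diagShift] using ⟨(hh k).1, (hh (k - 1)).2⟩)
  have hpow : ∀ d : ℤ, ∀ h ∈ S, (diagShift Φ ^ d) h ∈ S := by
    intro d
    induction d using Int.induction_on with
    | zero => simp
    | succ d ih => intro h hh; rw [zpow_add_one]; exact ih _ (hS h hh)
    | pred d ih => intro h hh; rw [zpow_sub_one]; exact ih _ (hS' h hh)
  exact hpow (l - k) g hg k

end Grid

theorem IsGrid.map_below_diag {Φ : α × β → α × β} {G : ℤ → ℤ → α × β}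
    (hG : IsGrid Φ G) {N : ℤ} (hper : ∀ k l, N ≤ k → N ≤ l → G k (l + 1) = G (k + 1) l)
    {k : ℤ} (hk : N < k) :
    Φ ((Φ (G k k)).1, (Φ (G (k + 1) (k + 1))).2) = ((G (k + 1) (k + 1)).1, (G k k).2) := by
  have hbelow : ((Φ (G k k)).1, (Φ (G (k + 1) (k + 1))).2) = G k (k + 1) :=
    Prod.ext (hG k k).1 (hG k (k + 1)).2
  have hright := (hG (k - 1) (k + 1)).2
  rw [sub_add_cancel, hper (k - 1) k (by omega) (by omega), sub_add_cancel] at hright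
  rw [hbelow, Prod.ext_iff, (hG k (k + 1)).1, hper k (k + 1) (by omega) (by omega)]
  exact ⟨rfl, hright⟩

lemma add_one_div_mod_cases {a : ℕ} (ha : 0 < a) (p : ℕ) :
    ((p + 1) / a = p / a ∧ (p + 1) % a = p % a + 1 ∧ p % a + 1 < a) ∨
    ((p + 1) / a = p / a + 1 ∧ (p + 1) % a = 0 ∧ p % a + 1 = a) := by
  have hp := Nat.mod_add_div p a
  rcases Nat.lt_or_ge (p % a + 1) a with h | h
  · have hq : p % a + 1 + a * (p / a) = p + 1 := by omega
    obtain ⟨hd, hm⟩ := (Nat.div_mod_unique ha).2 ⟨hq, h⟩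
    exact Or.inl ⟨hd, hm, h⟩
  · have hlast : p % a + 1 = a := le_antisymm (Nat.mod_lt p ha) h
    have hq : 0 + a * (p / a + 1) = p + 1 := by rw [mul_add]; omega
    obtain ⟨hd, hm⟩ := (Nat.div_mod_unique ha).2 ⟨hq, ha⟩
    exact Or.inr ⟨hd, hm, hlast⟩

section Cells

variable (f : α × β → α × β)

/-- The square `(r, c)` of a block is the `r`-th from the right and the `c`-th from the top; the
`e`-word `u` is read from right to left, so its last letter meets `v` first. -/
def blockTop [Inhabited α] (u : List α) (v : List β) (r c : ℕ) : α :=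
  (pushCol f (u.getD r default) ((pushBlock f (u.drop (r + 1)) v).1.take c)).2

def blockRight [Inhabited β] (u : List α) (v : List β) (r c : ℕ) : β :=
  (pushBlock f (u.drop r) v).1.getD c default

lemma blockTop_zero [Inhabited α] (u : List α) (v : List β) (r : ℕ) :
    blockTop f u v r 0 = u.getD r default := by
  simp [blockTop]

lemma blockTop_of_length_le [Inhabited α] (u : List α) (v : List β) {r c : ℕ}
    (hr : r < u.length) (hc : v.length ≤ c) :
    blockTop f u v r c = (pushBlock f u v).2.getD r default := by
  rw [getD_pushBlock_snd f default u v hr, blockTop, List.take_of_length_le (by simpa using hc)]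

lemma blockRight_zero [Inhabited β] (u : List α) (v : List β) (c : ℕ) :
    blockRight f u v 0 c = (pushBlock f u v).1.getD c default := by
  simp [blockRight]

lemma blockRight_of_length_le [Inhabited β] (u : List α) (v : List β) {r : ℕ}
    (hr : u.length ≤ r) (c : ℕ) : blockRight f u v r c = v.getD c default := by
  simp [blockRight, List.drop_eq_nil_of_le hr]

lemma map_blockTop_blockRight [Inhabited α] [Inhabited β] (u : List α) (v : List β) {r c : ℕ}
    (hr : r < u.length) (hc : c < v.length) :
    f (blockTop f u v r c, blockRight f u v (r + 1) c) =
      (blockTop f u v r (c + 1), blockRight f u v r c) := by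
  have hdrop : u.drop r = u.getD r default :: u.drop (r + 1) := by
    rw [List.getD_eq_getElem _ _ hr]; exact List.drop_eq_getElem_cons hr
  simp only [blockTop, blockRight]
  rw [hdrop, pushBlock_cons]
  exact map_pushCol_take f default _ _ (by simpa using hc)

variable (G : ℤ → ℤ → List α × List β) (a b : ℕ)

/-- Square `(p, q)` of the quadrant, counted leftwards and downwards, lies in block
`(p / a, q / b)`. -/
def cellTop [Inhabited α] (p q : ℕ) : α :=
  blockTop f (G (p / a : ℕ) (q / b : ℕ)).1 (G (p / a : ℕ) (q / b : ℕ)).2 (p % a) (q % b)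

def cellRight [Inhabited β] (p q : ℕ) : β :=
  blockRight f (G (p / a : ℕ) (q / b : ℕ)).1 (G (p / a : ℕ) (q / b : ℕ)).2 (p % a) (q % b)

variable {f G a b}

lemma map_cellTop_cellRight [Inhabited α] [Inhabited β] (ha : 0 < a) (hb : 0 < b)
    (hG : IsGrid (blockMap f) G) (hlen : ∀ k l, (G k l).1.length = a ∧ (G k l).2.length = b)
    (p q : ℕ) :
    f (cellTop f G a b p q, cellRight f G a b (p + 1) q) =
      (cellTop f G a b p (q + 1), cellRight f G a b p q) := by
  obtain ⟨hu, hv⟩ := hlen (p / a : ℕ) (q / b : ℕ)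
  have hr := Nat.mod_lt p ha
  have hc := Nat.mod_lt q hb
  have hleft : cellRight f G a b (p + 1) q =
      blockRight f (G (p / a : ℕ) (q / b : ℕ)).1 (G (p / a : ℕ) (q / b : ℕ)).2
        (p % a + 1) (q % b) := by
    rcases add_one_div_mod_cases ha p with ⟨hd, hm, -⟩ | ⟨hd, hm, hlast⟩
    · rw [cellRight, hd, hm]
    · rw [cellRight, hd, hm, blockRight_zero, hlast, blockRight_of_length_le f _ _ hu.le,
        Nat.cast_succ, ← (hG (p / a : ℕ) (q / b : ℕ)).2]
      rfl
  have hbelow : cellTop f G a b p (q + 1) =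
      blockTop f (G (p / a : ℕ) (q / b : ℕ)).1 (G (p / a : ℕ) (q / b : ℕ)).2
        (p % a) (q % b + 1) := by
    rcases add_one_div_mod_cases hb q with ⟨hd, hm, -⟩ | ⟨hd, hm, hlast⟩
    · rw [cellTop, hd, hm]
    · rw [cellTop, hd, hm, blockTop_zero, hlast, blockTop_of_length_le f _ _ (by omega) hv.le,
        Nat.cast_succ, ← (hG (p / a : ℕ) (q / b : ℕ)).1]
      rfl
  rw [hleft, hbelow]
  exact map_blockTop_blockRight f _ _ (by omega) (by omega)

lemma cellTop_mul_add [Inhabited α] (ha : 0 < a) (hb : 0 < b) (k l : ℕ) {r : ℕ} (hr : r < a) :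
    cellTop f G a b (a * k + r) (b * l) = (G k l).1.getD r default := by
  rw [cellTop, Nat.mul_add_div ha, Nat.div_eq_of_lt hr, Nat.mul_add_mod, Nat.mod_eq_of_lt hr,
    Nat.mul_div_cancel_left _ hb, Nat.mul_mod_right, blockTop_zero, add_zero]

lemma cellRight_mul_add [Inhabited β] (ha : 0 < a) (hb : 0 < b) (hG : IsGrid (blockMap f) G)
    (k l : ℕ) {c : ℕ} (hc : c < b) :
    cellRight f G a b (a * (k + 1)) (b * l + c) = (G k l).2.getD c default := by
  rw [cellRight, Nat.mul_div_cancel_left _ ha, Nat.mul_mod_right, Nat.mul_add_div hb,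
    Nat.div_eq_of_lt hc, add_zero, Nat.mul_add_mod, Nat.mod_eq_of_lt hc, blockRight_zero,
    Nat.cast_succ, ← (hG k l).2]
  rfl

lemma List.ext_getD {γ : Type*} (d : γ) {x y : List γ} {n : ℕ} (hx : x.length = n)
    (hy : y.length = n) (h : ∀ i < n, x.getD i d = y.getD i d) : x = y :=
  List.ext_getElem (hx.trans hy.symm) fun i hi₁ hi₂ => by
    rw [← List.getD_eq_getElem x d, ← List.getD_eq_getElem y d]
    exact h i (hx ▸ hi₁)

lemma IsGrid.periodic_of_cells [Inhabited α] [Inhabited β] (ha : 0 < a) (hb : 0 < b)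
    (hG : IsGrid (blockMap f) G) (hlen : ∀ k l, (G k l).1.length = a ∧ (G k l).2.length = b)
    {P : ℕ} (hcell : ∀ p q, P ≤ p → P ≤ q →
      cellTop f G a b p (q + b) = cellTop f G a b (p + a) q ∧
        cellRight f G a b p (q + b) = cellRight f G a b (p + a) q)
    (k l : ℤ) (hk : P ≤ k) (hl : P ≤ l) : G k (l + 1) = G (k + 1) l := by
  lift k to ℕ using by omega
  lift l to ℕ using by omega
  have hka := Nat.le_mul_of_pos_left k ha
  have hlb := Nat.le_mul_of_pos_left l hb
  refine Prod.ext (List.ext_getD default (hlen _ _).1 (hlen _ _).1 fun r hr => ?_)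
    (List.ext_getD default (hlen _ _).2 (hlen _ _).2 fun c hc => ?_)
  · have h := (hcell (a * k + r) (b * l) (by omega) (by omega)).1
    rw [← Nat.cast_add_one, ← Nat.cast_add_one, ← cellTop_mul_add ha hb _ _ hr,
      ← cellTop_mul_add ha hb _ _ hr]
    convert h using 2 <;> ring
  · have h := (hcell (a * (k + 1)) (b * l + c) (by nlinarith) (by omega)).2
    rw [← Nat.cast_add_one, ← Nat.cast_add_one, ← cellRight_mul_add ha hb hG _ _ hc,
      ← cellRight_mul_add ha hb hG _ _ hc]
    convert h using 2 <;> ring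

def TailsEventuallyPeriodic (f : α × β → α × β) (a b : ℕ) : Prop :=
  ∀ (I : ℤ → ℤ → α) (J : ℤ → ℤ → β),
    (∀ s t : ℤ, s ≤ 0 → t ≤ 0 → f (I s t, J (s - 1) t) = (I s (t - 1), J s t)) →
    ∃ T : ℤ, T ≤ 0 ∧ ∀ s t : ℤ, s ≤ T → t ≤ T →
      I (s + a) (t - b) = I s t ∧ J (s + a) (t - b) = J s t

lemma IsGrid.eventually_periodic [Inhabited α] [Inhabited β] (ha : 0 < a) (hb : 0 < b)
    (hG : IsGrid (blockMap f) G) (hlen : ∀ k l, (G k l).1.length = a ∧ (G k l).2.length = b)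
    (hper : TailsEventuallyPeriodic f a b) :
    ∃ N : ℤ, ∀ k l, N ≤ k → N ≤ l → G k (l + 1) = G (k + 1) l := by
  obtain ⟨T, -, hT⟩ := hper (fun s t => cellTop f G a b (-s).toNat (-t).toNat)
    (fun s t => cellRight f G a b (-s).toNat (-t).toNat) fun s t hs ht => by
      rw [show (-(s - 1)).toNat = (-s).toNat + 1 by omega,
        show (-(t - 1)).toNat = (-t).toNat + 1 by omega]
      exact map_cellTop_cellRight ha hb hG hlen _ _
  refine ⟨(-T).toNat, hG.periodic_of_cells ha hb hlen fun p q hp hq => ?_⟩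
  have h := hT (-(p + a : ℤ)) (-q) (by omega) (by omega)
  rwa [show (-(-(p + a : ℤ) + a)).toNat = p by omega,
    show (-(-(q : ℤ) - b)).toNat = q + b by omega,
    show (-(-(p + a : ℤ))).toNat = p + a by omega, show (-(-(q : ℤ))).toNat = q by omega] at h

end Cells

end TwoGraphTail

open TwoGraphTail in
theorem stmt_18_general (m n a b : ℕ) (ha : 0 < a) (hb : 0 < b)
    (θ : Equiv.Perm (Fin m × Fin n))
    (pastF : Fin m → List (Fin n) → List (Fin n) × Fin m)
    (hpastF_nil : ∀ i : Fin m, pastF i [] = ([], i))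
    (hpastF_cons : ∀ (i : Fin m) (j : Fin n) (rest : List (Fin n)),
      pastF i (j :: rest) =
        ((θ (i, j)).2 :: (pastF (θ (i, j)).1 rest).1, (pastF (θ (i, j)).1 rest).2))
    (pastFs : List (Fin m) → List (Fin n) → List (Fin n) × List (Fin m))
    (hpastFs_nil : ∀ v : List (Fin n), pastFs [] v = (v, []))
    (hpastFs_cons : ∀ (i : Fin m) (u : List (Fin m)) (v : List (Fin n)),
      pastFs (i :: u) v =
        ((pastF i (pastFs u v).1).1, (pastF i (pastFs u v).1).2 :: (pastFs u v).2))
    (hper : ∀ (I : ℤ → ℤ → Fin m) (J : ℤ → ℤ → Fin n),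
      (∀ s t : ℤ, s ≤ 0 → t ≤ 0 → θ (I s t, J (s - 1) t) = (I s (t - 1), J s t)) →
      ∃ T : ℤ, T ≤ 0 ∧ ∀ s t : ℤ, s ≤ T → t ≤ T →
        I (s + a) (t - b) = I s t ∧ J (s + a) (t - b) = J s t) :
    ∀ v : List (Fin n), v.length = b →
      ∀ u₁ u₂ : List (Fin m), u₁.length = a → u₂.length = a →
        (pastFs u₁ v).2 = (pastFs u₂ v).2 := by
  intro v hv u₁ u₂ hu₁ hu₂
  obtain rfl : pastF = pushCol θ := by
    funext i w
    induction w generalizing i <;> simp [*]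
  obtain rfl : pastFs = pushBlock θ := by
    funext u w
    induction u <;> simp [*]
  have : Inhabited (Fin m) := ⟨u₁[0]'(by omega)⟩
  have : Inhabited (Fin n) := ⟨v[0]'(by omega)⟩
  -- Period 3, so that `(u₂, u₁)` and `(u₁, u₁)` both occur as `(B k, B (k + 1))` for
  -- arbitrarily large `k`.
  set B : ℤ → List (Fin m) := fun k => if k % 3 = 0 then u₂ else u₁ with hB
  set G := stairGrid (blockEquiv θ) fun k => (B k, v)
  have hG : IsGrid (blockMap θ) G := isGrid_stairGrid (blockEquiv θ) _
  have hlen : ∀ k l, (G k l).1.length = a ∧ (G k l).2.length = b :=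
    stairGrid_mem (blockEquiv θ) (p := fun u => u.length = a) (q := fun w => w.length = b)
      (fun x => by simp [blockMap])
      fun k => ⟨by simp only [hB]; split <;> assumption, hv⟩
  obtain ⟨N, hN⟩ := hG.eventually_periodic ha hb hlen hper
  have h₂ := hG.map_below_diag hN (k := 3 * (N.toNat + 1)) (by omega)
  have h₁ := hG.map_below_diag hN (k := 3 * (N.toNat + 1) + 1) (by omega)
  simp only [G, stairGrid_self, hB] at h₁ h₂
  rw [if_pos (by omega), if_neg (by omega)] at h₂
  rw [if_neg (by omega), if_neg (by omega)] at h₁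
  exact congrArg Prod.fst ((blockEquiv θ).injective (h₁.trans h₂.symm))

/-- If every tail of `F_θ⁺` (encoded as a compatible grid of integer data) is
eventually `(a,-b)`-periodic, then in the unique factorization
`e_u f_v = f_{v'} e_{u'}` (computed by the commuting maps `pastF`/`pastFs`
determined by `θ`), the word `u'` depends only on `v ∈ nᵇ` and not on `u ∈ mᵃ`. -/
theorem stmt_18 (m n a b : ℕ) (hm : 2 ≤ m) (ha : 0 < a) (hb : 0 < b)
    (θ : Equiv.Perm (Fin m × Fin n))
    (pastF : Fin m → List (Fin n) → List (Fin n) × Fin m)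
    (hpastF_nil : ∀ i : Fin m, pastF i [] = ([], i))
    (hpastF_cons : ∀ (i : Fin m) (j : Fin n) (rest : List (Fin n)),
      pastF i (j :: rest) =
        ((θ (i, j)).2 :: (pastF (θ (i, j)).1 rest).1, (pastF (θ (i, j)).1 rest).2))
    (pastFs : List (Fin m) → List (Fin n) → List (Fin n) × List (Fin m))
    (hpastFs_nil : ∀ v : List (Fin n), pastFs [] v = (v, []))
    (hpastFs_cons : ∀ (i : Fin m) (u : List (Fin m)) (v : List (Fin n)),
      pastFs (i :: u) v =
        ((pastF i (pastFs u v).1).1, (pastF i (pastFs u v).1).2 :: (pastFs u v).2))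
    (hper : ∀ (I : ℤ → ℤ → Fin m) (J : ℤ → ℤ → Fin n),
      (∀ s t : ℤ, s ≤ 0 → t ≤ 0 → θ (I s t, J (s - 1) t) = (I s (t - 1), J s t)) →
      ∃ T : ℤ, T ≤ 0 ∧ ∀ s t : ℤ, s ≤ T → t ≤ T →
        I (s + a) (t - b) = I s t ∧ J (s + a) (t - b) = J s t) :
    ∀ v : List (Fin n), v.length = b →
      ∀ u₁ u₂ : List (Fin m), u₁.length = a → u₂.length = a →
        (pastFs u₁ v).2 = (pastFs u₂ v).2 :=
  stmt_18_general m n a b ha hb θ pastF hpastF_nil hpastF_cons pastFs hpastFs_nil hpastFs_cons hper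
end

section
/- In the 3×3 2-graph given by the 8-cycle ((1,3),(1,1),(3,1),(3,3),(2,3),(1,2),(2,1),(3,2)) (all other points fixed), for every k ≥ 2 there exist a word u_k ∈ m^k and the identity e₁^k f₁^k = f₁ f₃ f₂^{k−2} e_{u_k}; consequently, since for k ≥ 4 one has e_{u_k} f₁f₃f₂^{k−2} ≠ f₁^k e₁^k, the semigroup is not (k,−k)-periodic for any k ≥ 4. -/
/-! Auxiliary combinatorics for the normal-form computation. -/

def stmtTau : Fin 3 → Fin 3 → Fin 3 := fun i j =>
  (![![2, 1, 0], ![2, 1, 0], ![2, 0, 1]] : Fin 3 → Fin 3 → Fin 3) i j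

/-- Push one `f`-letter from the right through an `e`-word; returns the emitted
`f`-letter and the transformed `e`-word. -/
def stmtPush : List (Fin 3) → Fin 3 → Fin 3 × List (Fin 3)
  | [], j => (j, [])
  | i :: xs, j => (i, stmtTau i (stmtPush xs j).1 :: (stmtPush xs j).2)

/-- Normal form: commute all `f`-letters of `y` through the `e`-word `x`. -/
def stmtNF : List (Fin 3) → List (Fin 3) → List (Fin 3) × List (Fin 3)
  | x, [] => ([], x)
  | x, j :: ys =>
    ((stmtPush x j).1 :: (stmtNF (stmtPush x j).2 ys).1, (stmtNF (stmtPush x j).2 ys).2)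

def stmtAltc : ℕ → Fin 3 := fun m => if m % 2 = 0 then 2 else 0

def stmtAlt : ℕ → List (Fin 3)
  | 0 => []
  | m + 1 => stmtAltc m :: stmtAlt m

lemma stmtPush_len : ∀ (x : List (Fin 3)) (j), (stmtPush x j).2.length = x.length := by
  intro x j
  induction x with
  | nil => rfl
  | cons i xs ih => simp [stmtPush, ih]

lemma stmtNF_len1 : ∀ (y x : List (Fin 3)), (stmtNF x y).1.length = y.length := by
  intro y
  induction y with
  | nil => intro x; rfl
  | cons j ys ih => intro x; simp [stmtNF, ih]

lemma stmtNF_len2 : ∀ (y x : List (Fin 3)), (stmtNF x y).2.length = x.length := by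
  intro y
  induction y with
  | nil => intro x; rfl
  | cons j ys ih => intro x; simp [stmtNF, ih, stmtPush_len]

lemma stmtAlt_len : ∀ m, (stmtAlt m).length = m := by
  intro m
  induction m with
  | zero => rfl
  | succ m ih => simp [stmtAlt, ih]

lemma stmtPush_rep0 : ∀ n, stmtPush (List.replicate n 0) 0 = (0, List.replicate n 2) := by
  intro n
  induction n with
  | zero => rfl
  | succ n ih => simp [List.replicate_succ, stmtPush, ih]; decide

lemma stmtPush_cons (i : Fin 3) (xs : List (Fin 3)) (j : Fin 3) :
    stmtPush (i :: xs) j = (i, stmtTau i (stmtPush xs j).1 :: (stmtPush xs j).2) := rfl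

lemma stmtNF_cons (x : List (Fin 3)) (j : Fin 3) (ys : List (Fin 3)) :
    stmtNF x (j :: ys) = ((stmtPush x j).1 :: (stmtNF (stmtPush x j).2 ys).1,
      (stmtNF (stmtPush x j).2 ys).2) := rfl

lemma stmtPush_rep2 : ∀ n,
    stmtPush (List.replicate (n + 1) 2) 0 = (2, List.replicate n 1 ++ [2]) := by
  intro n
  induction n with
  | zero => decide
  | succ n ih =>
    calc stmtPush (List.replicate (n + 1 + 1) 2) 0
        = (2, stmtTau 2 (stmtPush (List.replicate (n + 1) 2) 0).1 ::
            (stmtPush (List.replicate (n + 1) 2) 0).2) := rfl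
      _ = (2, stmtTau 2 2 :: (List.replicate n 1 ++ [2])) := by rw [ih]
      _ = (2, List.replicate (n + 1) 1 ++ [2]) := by
            rw [show stmtTau 2 2 = 1 by decide]; rfl

lemma stmtTau_altc : ∀ m, stmtTau (stmtAltc (m + 1)) (stmtAltc m) = stmtAltc (m + 1) := by
  intro m
  rcases Nat.even_or_odd m with h | h
  · have h0 : m % 2 = 0 := Nat.even_iff.mp h
    have h1 : (m + 1) % 2 = 1 := by omega
    simp [stmtAltc, h0, h1]; decide
  · have h0 : m % 2 = 1 := Nat.odd_iff.mp h
    have h1 : (m + 1) % 2 = 0 := by omega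
    simp [stmtAltc, h0, h1]; decide

lemma stmtTau_one_altc : ∀ m, stmtTau 1 (stmtAltc m) = stmtAltc (m + 1) := by
  intro m
  rcases Nat.even_or_odd m with h | h
  · have h0 : m % 2 = 0 := Nat.even_iff.mp h
    have h1 : (m + 1) % 2 = 1 := by omega
    simp [stmtAltc, h0, h1]; decide
  · have h0 : m % 2 = 1 := Nat.odd_iff.mp h
    have h1 : (m + 1) % 2 = 0 := by omega
    simp [stmtAltc, h0, h1]; decide

lemma stmtPush_alt : ∀ m, stmtPush (stmtAlt (m + 1)) 0 = (stmtAltc m, stmtAlt (m + 1)) := by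
  intro m
  induction m with
  | zero => decide
  | succ m ih =>
    calc stmtPush (stmtAlt (m + 1 + 1)) 0
        = (stmtAltc (m + 1), stmtTau (stmtAltc (m + 1)) (stmtPush (stmtAlt (m + 1)) 0).1 ::
            (stmtPush (stmtAlt (m + 1)) 0).2) := rfl
      _ = (stmtAltc (m + 1), stmtTau (stmtAltc (m + 1)) (stmtAltc m) :: stmtAlt (m + 1)) := by
            rw [ih]
      _ = (stmtAltc (m + 1), stmtAlt (m + 1 + 1)) := by rw [stmtTau_altc m]; rfl

lemma stmtPush_ones : ∀ a m, stmtPush (List.replicate (a + 1) 1 ++ stmtAlt (m + 1)) 0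
    = (1, List.replicate a 1 ++ stmtAlt (m + 1 + 1)) := by
  intro a
  induction a with
  | zero =>
    intro m
    calc stmtPush (List.replicate 1 1 ++ stmtAlt (m + 1)) 0
        = (1, stmtTau 1 (stmtPush (stmtAlt (m + 1)) 0).1 ::
            (stmtPush (stmtAlt (m + 1)) 0).2) := by with_unfolding_all rfl
      _ = (1, stmtTau 1 (stmtAltc m) :: stmtAlt (m + 1)) := by rw [stmtPush_alt m]
      _ = (1, List.replicate 0 1 ++ stmtAlt (m + 1 + 1)) := by rw [stmtTau_one_altc m]; rfl
  | succ a ih =>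
    intro m
    calc stmtPush (List.replicate (a + 1 + 1) 1 ++ stmtAlt (m + 1)) 0
        = (1, stmtTau 1 (stmtPush (List.replicate (a + 1) 1 ++ stmtAlt (m + 1)) 0).1 ::
            (stmtPush (List.replicate (a + 1) 1 ++ stmtAlt (m + 1)) 0).2) := by
              with_unfolding_all rfl
      _ = (1, stmtTau 1 1 :: (List.replicate a 1 ++ stmtAlt (m + 1 + 1))) := by rw [ih m]
      _ = (1, List.replicate (a + 1) 1 ++ stmtAlt (m + 1 + 1)) := by
            rw [show stmtTau 1 1 = 1 by decide]; rfl

lemma stmtNF_ones : ∀ t a m,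
    stmtNF (List.replicate (a + t) 1 ++ stmtAlt (m + 1)) (List.replicate t 0)
      = (List.replicate t 1, List.replicate a 1 ++ stmtAlt (m + 1 + t)) := by
  intro t
  induction t with
  | zero => intro a m; rfl
  | succ t ih =>
    intro a m
    calc stmtNF (List.replicate (a + (t + 1)) 1 ++ stmtAlt (m + 1)) (List.replicate (t + 1) 0)
        = ((stmtPush (List.replicate (a + t + 1) 1 ++ stmtAlt (m + 1)) 0).1 ::
            (stmtNF (stmtPush (List.replicate (a + t + 1) 1 ++ stmtAlt (m + 1)) 0).2
              (List.replicate t 0)).1,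
           (stmtNF (stmtPush (List.replicate (a + t + 1) 1 ++ stmtAlt (m + 1)) 0).2
              (List.replicate t 0)).2) := by with_unfolding_all rfl
      _ = ((1 : Fin 3) ::
            (stmtNF (List.replicate (a + t) 1 ++ stmtAlt (m + 1 + 1)) (List.replicate t 0)).1,
           (stmtNF (List.replicate (a + t) 1 ++ stmtAlt (m + 1 + 1)) (List.replicate t 0)).2) := by
            rw [stmtPush_ones (a + t) m]
      _ = (1 :: List.replicate t 1, List.replicate a 1 ++ stmtAlt (m + 1 + 1 + t)) := by
            rw [ih a (m + 1)]
      _ = (List.replicate (t + 1) 1, List.replicate a 1 ++ stmtAlt (m + 1 + (t + 1))) := by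
            rw [show m + 1 + 1 + t = m + 1 + (t + 1) by omega, List.replicate_succ]

lemma stmtNF_main : ∀ t, stmtNF (List.replicate (t + 2) 0) (List.replicate (t + 2) 0)
    = (0 :: 2 :: List.replicate t 1, 1 :: stmtAlt (t + 1)) := by
  intro t
  have e1 : stmtPush (List.replicate (t + 2) (0 : Fin 3)) 0
      = (0, List.replicate (t + 2) 2) := stmtPush_rep0 (t + 2)
  have e2 : stmtPush (List.replicate (t + 2) (2 : Fin 3)) 0
      = (2, List.replicate (t + 1) 1 ++ [2]) := stmtPush_rep2 (t + 1)
  have e3 : stmtNF (List.replicate (t + 1) (1 : Fin 3) ++ [2]) (List.replicate t 0)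
      = (List.replicate t 1, 1 :: stmtAlt (t + 1)) := by
    have h := stmtNF_ones t 1 0
    rw [show (1 : ℕ) + t = t + 1 by omega] at h
    rw [show (0 : ℕ) + 1 = 1 by omega] at h
    rw [show stmtAlt 1 = [(2 : Fin 3)] by decide] at h
    simpa using h
  calc stmtNF (List.replicate (t + 2) (0 : Fin 3)) (List.replicate (t + 2) 0)
      = ((stmtPush (List.replicate (t + 2) (0 : Fin 3)) 0).1 ::
          (stmtNF (stmtPush (List.replicate (t + 2) (0 : Fin 3)) 0).2
            (List.replicate (t + 1) 0)).1,
         (stmtNF (stmtPush (List.replicate (t + 2) (0 : Fin 3)) 0).2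
            (List.replicate (t + 1) 0)).2) := by with_unfolding_all rfl
    _ = ((0 : Fin 3) :: (stmtNF (List.replicate (t + 2) (2 : Fin 3)) (List.replicate (t + 1) 0)).1,
         (stmtNF (List.replicate (t + 2) (2 : Fin 3)) (List.replicate (t + 1) 0)).2) := by
          rw [e1]
    _ = ((0 : Fin 3) ::
          ((stmtPush (List.replicate (t + 2) (2 : Fin 3)) 0).1 ::
            (stmtNF (stmtPush (List.replicate (t + 2) (2 : Fin 3)) 0).2
              (List.replicate t 0)).1),
         (stmtNF (stmtPush (List.replicate (t + 2) (2 : Fin 3)) 0).2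
            (List.replicate t 0)).2) := by with_unfolding_all rfl
    _ = ((0 : Fin 3) :: (2 : Fin 3) ::
          (stmtNF (List.replicate (t + 1) (1 : Fin 3) ++ [2]) (List.replicate t 0)).1,
         (stmtNF (List.replicate (t + 1) (1 : Fin 3) ++ [2]) (List.replicate t 0)).2) := by
          rw [e2]
    _ = (0 :: 2 :: List.replicate t 1, 1 :: stmtAlt (t + 1)) := by rw [e3]

section Algebra

variable {M : Type*} [Monoid M] (e f : Fin 3 → M)
  (hrel : ∀ i j : Fin 3, e i * f j = f i * e (stmtTau i j))

include hrel

lemma stmtPush_spec : ∀ (x : List (Fin 3)) (j : Fin 3),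
    (x.map e).prod * f j = f (stmtPush x j).1 * (((stmtPush x j).2).map e).prod := by
  intro x j
  induction x with
  | nil => simp [stmtPush]
  | cons i xs ih =>
    rw [List.map_cons, List.prod_cons, mul_assoc, ih, ← mul_assoc, hrel, mul_assoc]
    simp [stmtPush]

lemma stmtNF_spec : ∀ (y x : List (Fin 3)),
    (x.map e).prod * (y.map f).prod
      = (((stmtNF x y).1).map f).prod * (((stmtNF x y).2).map e).prod := by
  intro y
  induction y with
  | nil => intro x; simp [stmtNF]
  | cons j ys ih =>
    intro x
    rw [List.map_cons, List.prod_cons, ← mul_assoc, stmtPush_spec e f hrel, mul_assoc,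
      ih ((stmtPush x j).2)]
    simp [stmtNF, mul_assoc]

end Algebra

/-- In the 3×3 2-graph given by the stated 8-cycle (0-based: relations
`e_i f_j = f_{J i j} e_{I i j}` for the matrices below), for every `k ≥ 2` there is a
word `u_k` of length `k` with `e₁^k f₁^k = f₁ f₃ f₂^{k-2} e_{u_k}`, and for `k ≥ 4`
one has `e_{u_k} f₁f₃f₂^{k-2} ≠ f₁^k e₁^k`; consequently the semigroup is not
`(k,-k)`-periodic for any `k ≥ 4`. -/
theorem stmt_19 (M : Type*) [CancelMonoid M] (e f : Fin 3 → M)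
    (hrel : ∀ i j : Fin 3,
      e i * f j =
        f ((![![0, 0, 0], ![1, 1, 1], ![2, 2, 2]] : Fin 3 → Fin 3 → Fin 3) i j) *
        e ((![![2, 1, 0], ![2, 1, 0], ![2, 0, 1]] : Fin 3 → Fin 3 → Fin 3) i j))
    (huf : ∀ (v v' : List (Fin 3)) (u u' : List (Fin 3)),
      v.length = v'.length → u.length = u'.length →
      (v.map f).prod * (u.map e).prod = (v'.map f).prod * (u'.map e).prod →
      v = v' ∧ u = u') :
    (∀ k : ℕ, 2 ≤ k → ∃ u : List (Fin 3), u.length = k ∧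
      (e 0) ^ k * (f 0) ^ k = f 0 * f 2 * (f 1) ^ (k - 2) * (u.map e).prod ∧
      (4 ≤ k →
        (u.map e).prod * (f 0 * f 2 * (f 1) ^ (k - 2)) ≠ (f 0) ^ k * (e 0) ^ k)) ∧
    (∀ k : ℕ, 4 ≤ k →
      ¬ ∃ γ : (Fin k → Fin 3) → (Fin k → Fin 3), Function.Bijective γ ∧
        ∀ u u' : Fin k → Fin 3,
          (List.ofFn fun t => e (u t)).prod * (List.ofFn fun t => f (γ u' t)).prod =
            (List.ofFn fun t => f (γ u t)).prod * (List.ofFn fun t => e (u' t)).prod) := by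
  have hJ : ∀ i j : Fin 3, (![![0, 0, 0], ![1, 1, 1], ![2, 2, 2]] : Fin 3 → Fin 3 → Fin 3) i j = i := by
    decide
  have hrel' : ∀ i j : Fin 3, e i * f j = f i * e (stmtTau i j) := by
    intro i j
    have := hrel i j
    rwa [hJ i j] at this
  -- main claim, with explicit witness
  have main : ∀ k : ℕ, 2 ≤ k →
      (1 :: stmtAlt (k - 1)).length = k ∧
      (e 0) ^ k * (f 0) ^ k
        = f 0 * f 2 * (f 1) ^ (k - 2) * (((1 :: stmtAlt (k - 1)).map e)).prod ∧
      (4 ≤ k →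
        (((1 :: stmtAlt (k - 1)).map e)).prod * (f 0 * f 2 * (f 1) ^ (k - 2))
          ≠ (f 0) ^ k * (e 0) ^ k) := by
    intro k hk
    obtain ⟨t, rfl⟩ : ∃ t, k = t + 2 := ⟨k - 2, by omega⟩
    have hk1 : t + 2 - 1 = t + 1 := by omega
    have hk2 : t + 2 - 2 = t := by omega
    rw [hk1, hk2]
    have hlen : (1 :: stmtAlt (t + 1)).length = t + 2 := by
      simp [stmtAlt_len]
    refine ⟨hlen, ?_, ?_⟩
    · have h := stmtNF_spec e f hrel' (List.replicate (t + 2) 0) (List.replicate (t + 2) 0)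
      rw [stmtNF_main t] at h
      have he : ((List.replicate (t + 2) (0 : Fin 3)).map e).prod = (e 0) ^ (t + 2) := by
        simp [List.map_replicate, List.prod_replicate]
      have hf : ((List.replicate (t + 2) (0 : Fin 3)).map f).prod = (f 0) ^ (t + 2) := by
        simp [List.map_replicate, List.prod_replicate]
      rw [he, hf] at h
      rw [h]
      simp [List.map_replicate, List.prod_replicate, mul_assoc]
    · intro _ habs
      set u : List (Fin 3) := 1 :: stmtAlt (t + 1) with hu
      set w : List (Fin 3) := 0 :: 2 :: List.replicate t 1 with hw
      have hwprod : (w.map f).prod = f 0 * f 2 * (f 1) ^ t := by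
        simp [hw, List.map_replicate, List.prod_replicate, mul_assoc]
      have h := stmtNF_spec e f hrel' w u
      rw [hwprod, habs] at h
      have hrepf : ((List.replicate (t + 2) (0 : Fin 3)).map f).prod = (f 0) ^ (t + 2) := by
        simp [List.map_replicate, List.prod_replicate]
      have hrepe : ((List.replicate (t + 2) (0 : Fin 3)).map e).prod = (e 0) ^ (t + 2) := by
        simp [List.map_replicate, List.prod_replicate]
      rw [← hrepf, ← hrepe] at h
      have hL1 : (stmtNF u w).1.length = (List.replicate (t + 2) (0 : Fin 3)).length := by
        rw [stmtNF_len1]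
        simp [hw]
      have hL2 : (stmtNF u w).2.length = (List.replicate (t + 2) (0 : Fin 3)).length := by
        rw [stmtNF_len2]
        simp [hu, stmtAlt_len]
      obtain ⟨hv, -⟩ := huf _ _ _ _ hL1 hL2 h.symm
      -- but the first letter of (stmtNF u w).1 is 1, while replicate starts with 0
      have hhead : (stmtNF u w).1 = 1 :: ((stmtNF (stmtPush u 0).2 (2 :: List.replicate t 1)).1) := by
        simp [hw, stmtNF, hu, stmtPush]
      rw [hhead, List.replicate_succ] at hv
      have := List.head_eq_of_cons_eq hv
      exact absurd this (by decide)
  constructor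
  · intro k hk
    exact ⟨1 :: stmtAlt (k - 1), main k hk⟩
  · intro k hk ⟨γ, hγbij, hγ⟩
    have hk2 : 2 ≤ k := by omega
    obtain ⟨hlen, heq, hne⟩ := main k hk2
    set u : List (Fin 3) := 1 :: stmtAlt (k - 1) with hu
    set w : List (Fin 3) := 0 :: 2 :: List.replicate (k - 2) 1 with hw
    have hwlen : w.length = k := by simp [hw]; omega
    have hwprod : (w.map f).prod = f 0 * f 2 * (f 1) ^ (k - 2) := by
      simp [hw, List.map_replicate, List.prod_replicate, mul_assoc]
    -- the constant-0 function
    set u0 : Fin k → Fin 3 := fun _ => 0 with hu0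
    obtain ⟨u', hu'⟩ := hγbij.2 u0
    have hofn : ∀ g : Fin k → Fin 3,
        (List.ofFn fun t => e (g t)) = (List.ofFn g).map e := by
      intro g; rw [List.map_ofFn]; rfl
    have hofnf : ∀ g : Fin k → Fin 3,
        (List.ofFn fun t => f (g t)) = (List.ofFn g).map f := by
      intro g; rw [List.map_ofFn]; rfl
    have hofn0 : List.ofFn u0 = List.replicate k 0 := by
      simp [hu0]
    have hrepe : ((List.replicate k (0 : Fin 3)).map e).prod = (e 0) ^ k := by
      simp [List.map_replicate, List.prod_replicate]
    have hrepf : ((List.replicate k (0 : Fin 3)).map f).prod = (f 0) ^ k := by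
      simp [List.map_replicate, List.prod_replicate]
    -- first use of the γ-relation: identify γ u0 and u'
    have h1 := hγ u0 u'
    rw [hofn u0, hofnf (γ u'), hofnf (γ u0), hofn u', hu', hofn0, hrepe, hrepf] at h1
    -- h1 : e0^k * f0^k = fprod (ofFn (γ u0)) * eprod (ofFn u')
    rw [heq, ← hwprod] at h1
    have hL1 : w.length = (List.ofFn (γ u0)).length := by
      rw [hwlen, List.length_ofFn]
    have hL2 : u.length = (List.ofFn u').length := by
      rw [hlen, List.length_ofFn]
    obtain ⟨hv1, hv2⟩ := huf _ _ _ _ hL1 hL2 h1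
    -- second use: swap roles
    have h2 := hγ u' u0
    rw [hofn u', hofnf (γ u0), hofnf (γ u'), hofn u0, hu', hofn0, hrepe, hrepf] at h2
    rw [← hv1, ← hv2, hwprod] at h2
    exact hne hk h2
end
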